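/- arXiv:2204.01373 — 2 statements merged into one kernel-verified Lean document; each statement's English description precedes it below -/
import Mathlib

section
/- For every integer n ≥ 1 and all real numbers a_1,…,a_n, letting S_t := ∑_{s=1}^t a_s denote the partial sums, the Bartlett-kernel quadratic form with bandwidth equal to sample size admits the exact decomposition: (1/n) ∑_{i=1}^n ∑_{j=1}^n (1 − |i−j|/n) a_i a_j = (1/n²) ∑_{t=1}^n S_t² + (1/n²) ∑_{t=1}^n (S_t − S_n)². -/
/-!
Write `S_t = ∑_{s ≤ t, s ∈ [1, n]} a_s` and `S_t - S_n = -∑_{t < s ≤ n} a_s`. Expanding the squares,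
the right-hand side becomes `n⁻² ∑_{i,j} c_{ij} a_i a_j`, where `c_{ij}` counts the `t ∈ [1, n]` with
`max i j ≤ t` plus those with `t < min i j`, i.e. `c_{ij} = (n + 1 - max i j) + (min i j - 1) = n - |i - j|`.
-/

open Finset

theorem sum_sq_sum_filter {ι κ R : Type*} [CommSemiring R] (T : Finset κ) (S : Finset ι)
    (p : κ → ι → Prop) [∀ t, DecidablePred (p t)] (a : ι → R) :
    ∑ t ∈ T, (∑ s ∈ S with p t s, a s) ^ 2
      = ∑ i ∈ S, ∑ j ∈ S, (#{t ∈ T | p t i ∧ p t j} : R) * (a i * a j) := by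
  simp_rw [sq, sum_filter, sum_mul_sum, ite_zero_mul_ite_zero]
  rw [sum_comm]
  refine sum_congr rfl fun i _ => ?_
  rw [sum_comm]
  refine sum_congr rfl fun j _ => ?_
  simp only [← sum_boole, sum_mul, boole_mul]

section PartialSums

variable {M : Type*} [AddCommGroup M] {n t : ℕ}

theorem sum_Icc_one_eq_sum_filter_le (a : ℕ → M) (ht : t ≤ n) :
    ∑ s ∈ Icc 1 t, a s = ∑ s ∈ Icc 1 n with s ≤ t, a s := by
  congr 1
  ext s
  simp only [mem_filter, mem_Icc]
  omega

theorem sum_Icc_one_sub_sum_Icc_one (a : ℕ → M) (ht : t ≤ n) :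
    ∑ s ∈ Icc 1 t, a s - ∑ s ∈ Icc 1 n, a s = -∑ s ∈ Icc 1 n with t < s, a s := by
  rw [← sum_filter_add_sum_filter_not (Icc 1 n) (· ≤ t), ← sum_Icc_one_eq_sum_filter_le a ht]
  simp only [not_le]
  abel

end PartialSums

section Counting

variable {n i j : ℕ}

theorem card_filter_max_le (hi : 1 ≤ i) :
    #{t ∈ Icc 1 n | i ≤ t ∧ j ≤ t} = n + 1 - max i j := by
  rw [← Nat.card_Icc (max i j) n]
  congr 1
  ext t
  simp only [mem_filter, mem_Icc, max_le_iff]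
  omega

theorem card_filter_lt_min (hi : i ≤ n) :
    #{t ∈ Icc 1 n | t < i ∧ t < j} = min i j - 1 := by
  rw [← Nat.card_Ico 1 (min i j)]
  congr 1
  ext t
  simp only [mem_filter, mem_Icc, mem_Ico, lt_min_iff]
  omega

theorem sub_max_add_min_eq_sub_abs (hi : i ∈ Icc 1 n) (hj : j ∈ Icc 1 n) :
    ((n + 1 - max i j : ℕ) : ℝ) + ((min i j - 1 : ℕ) : ℝ) = n - |(i : ℝ) - j| := by
  rw [mem_Icc] at hi hj
  rcases le_total i j with h | h
  · rw [max_eq_right h, min_eq_left h, abs_sub_comm,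
      abs_of_nonneg (sub_nonneg.mpr (Nat.cast_le.mpr h))]
    push_cast [Nat.cast_sub (by omega : j ≤ n + 1), Nat.cast_sub hi.1]
    ring
  · rw [max_eq_left h, min_eq_right h, abs_of_nonneg (sub_nonneg.mpr (Nat.cast_le.mpr h))]
    push_cast [Nat.cast_sub (by omega : i ≤ n + 1), Nat.cast_sub hj.1]
    ring

end Counting

theorem bartlett_quadratic_form_decomposition_general (n : ℕ) (a : ℕ → ℝ) :
    (n : ℝ)⁻¹ *
        ∑ i ∈ Finset.Icc 1 n, ∑ j ∈ Finset.Icc 1 n,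
          (1 - |(i : ℝ) - (j : ℝ)| / (n : ℝ)) * (a i * a j)
      = ((n : ℝ) ^ 2)⁻¹ * ∑ t ∈ Finset.Icc 1 n, (∑ s ∈ Finset.Icc 1 t, a s) ^ 2
        + ((n : ℝ) ^ 2)⁻¹ * ∑ t ∈ Finset.Icc 1 n,
            ((∑ s ∈ Finset.Icc 1 t, a s) - ∑ s ∈ Finset.Icc 1 n, a s) ^ 2 := by
  have forward : ∀ t ∈ Icc 1 n,
      (∑ s ∈ Icc 1 t, a s) ^ 2 = (∑ s ∈ Icc 1 n with s ≤ t, a s) ^ 2 := fun t ht => by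
    rw [sum_Icc_one_eq_sum_filter_le a (mem_Icc.mp ht).2]
  have backward : ∀ t ∈ Icc 1 n, (∑ s ∈ Icc 1 t, a s - ∑ s ∈ Icc 1 n, a s) ^ 2
      = (∑ s ∈ Icc 1 n with t < s, a s) ^ 2 := fun t ht => by
    rw [sum_Icc_one_sub_sum_Icc_one a (mem_Icc.mp ht).2, neg_sq]
  rw [sum_congr rfl forward, sum_congr rfl backward, sum_sq_sum_filter, sum_sq_sum_filter,
    ← mul_add, ← sum_add_distrib, mul_sum, mul_sum]
  refine sum_congr rfl fun i hi => ?_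
  rw [← sum_add_distrib, mul_sum, mul_sum]
  refine sum_congr rfl fun j hj => ?_
  obtain ⟨hi1, hin⟩ := mem_Icc.mp hi
  have hn : (n : ℝ) ≠ 0 := Nat.cast_ne_zero.mpr (by omega)
  rw [← add_mul, card_filter_max_le hi1, card_filter_lt_min hin, sub_max_add_min_eq_sub_abs hi hj]
  field_simp

/-- **Bartlett-kernel decomposition.** For every integer `n ≥ 1` and all real numbers
`a_1, …, a_n`, with partial sums `S_t = ∑_{s=1}^t a_s`, the Bartlett-kernel quadratic form
with bandwidth equal to the sample size satisfies
`(1/n) ∑_{i=1}^n ∑_{j=1}^n (1 − |i−j|/n) a_i a_j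
  = (1/n²) ∑_{t=1}^n S_t² + (1/n²) ∑_{t=1}^n (S_t − S_n)²`. -/
theorem bartlett_quadratic_form_decomposition (n : ℕ) (hn : 1 ≤ n) (a : ℕ → ℝ) :
    (n : ℝ)⁻¹ *
        ∑ i ∈ Finset.Icc 1 n, ∑ j ∈ Finset.Icc 1 n,
          (1 - |(i : ℝ) - (j : ℝ)| / (n : ℝ)) * (a i * a j)
      = ((n : ℝ) ^ 2)⁻¹ * ∑ t ∈ Finset.Icc 1 n, (∑ s ∈ Finset.Icc 1 t, a s) ^ 2
        + ((n : ℝ) ^ 2)⁻¹ * ∑ t ∈ Finset.Icc 1 n,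
            ((∑ s ∈ Finset.Icc 1 t, a s) - ∑ s ∈ Finset.Icc 1 n, a s) ^ 2 :=
  bartlett_quadratic_form_decomposition_general n a
end

section
/- Beveridge–Nelson-type partial-sum identity for a finite-order vector autoregression: let q, n, d ≥ 1 be integers, let Φ_1,…,Φ_q be real d×d matrices such that A := I_d − ∑_{j=1}^q Φ_j is invertible, and let (w_t)_{t=1−q}^n and (ε_t)_{t=1}^n be ℝ^d-valued sequences satisfying w_t = ∑_{j=1}^q Φ_j w_{t−j} + ε_t for every t = 1,…,n. Define w̄_t := A^{-1} ∑_{i=1}^q (∑_{j=i}^q Φ_j) w_{t+1−i} for t = 0,…,n. Then ∑_{t=1}^n w_t = A^{-1} ∑_{t=1}^n ε_t + w̄_0 − w̄_n. -/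
open Matrix

noncomputable section

/-- `w̄_t = A⁻¹ ∑_{i=1}^q (∑_{j=i}^q Φ_j) w_{t+1−i}`, with `A = I − ∑_{j=1}^q Φ_j`. -/
def bnBar (d q : ℕ) (Φ : ℕ → Matrix (Fin d) (Fin d) ℝ) (w : ℤ → Fin d → ℝ) (t : ℤ) :
    Fin d → ℝ :=
  ((1 : Matrix (Fin d) (Fin d) ℝ) - ∑ j ∈ Finset.Icc 1 q, Φ j)⁻¹ *ᵥ
    ∑ i ∈ Finset.Icc 1 q, (∑ j ∈ Finset.Icc i q, Φ j) *ᵥ w ((t : ℤ) + 1 - (i : ℤ))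

/-!
Summation by parts in the lag index turns the recursion into
`A w_t = ε_t + (A w̄_{t-1} - A w̄_t)`, because `∑_{i=1}^q (∑_{j=i}^q Φ_j) (w_{t-i} - w_{t+1-i})`
telescopes in `i` to `∑_j Φ_j (w_{t-j} - w_t)`. Summing over `t = 1, …, n` telescopes again,
and `A⁻¹` finishes.
-/

open Finset

section Telescoping

variable {V : Type*} [AddCommGroup V]

theorem Finset.sum_Icc_int_sub_telescope (f : ℤ → V) (n : ℕ) :
    ∑ t ∈ Icc (1 : ℤ) n, (f (t - 1) - f t) = f 0 - f n := by
  induction n with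
  | zero => simp
  | succ n ih =>
    have hIcc : Icc (1 : ℤ) (n + 1) = insert ((n : ℤ) + 1) (Icc (1 : ℤ) n) := by
      ext; simp; omega
    push_cast
    rw [hIcc, sum_insert (by simp), ih, add_sub_cancel_right]
    abel

theorem Finset.sum_Icc_sub_lag_telescope (g : ℤ → V) (t : ℤ) (j : ℕ) :
    ∑ i ∈ Icc 1 j, (g (t - i) - g (t - i + 1)) = g (t - j) - g t := by
  induction j with
  | zero => simp
  | succ j ih =>
    rw [sum_Icc_succ_top (by omega), ih]
    push_cast
    rw [sub_add_eq_sub_sub, sub_add_cancel]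
    abel

end Telescoping

section VarTail

variable {m R : Type*} [Fintype m] [Ring R]

/-- `A w̄_t`, so that `bnBar d q Φ w t = A⁻¹ *ᵥ varTail q Φ w t` holds by `rfl`. -/
def varTail (q : ℕ) (Φ : ℕ → Matrix m m R) (w : ℤ → m → R) (t : ℤ) : m → R :=
  ∑ i ∈ Icc 1 q, (∑ j ∈ Icc i q, Φ j) *ᵥ w (t + 1 - i)

theorem varTail_sub_varTail (q : ℕ) (Φ : ℕ → Matrix m m R) (w : ℤ → m → R) (t : ℤ) :
    varTail q Φ w (t - 1) - varTail q Φ w t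
      = ∑ j ∈ Icc 1 q, Φ j *ᵥ w (t - j) - (∑ j ∈ Icc 1 q, Φ j) *ᵥ w t :=
  calc varTail q Φ w (t - 1) - varTail q Φ w t
      = ∑ i ∈ Icc 1 q, ∑ j ∈ Icc i q, Φ j *ᵥ (w (t - i) - w (t - i + 1)) := by
        simp only [varTail, ← sum_sub_distrib, ← mulVec_sub, sum_mulVec]
        congr! 5 <;> ring
    _ = ∑ j ∈ Icc 1 q, ∑ i ∈ Icc 1 j, Φ j *ᵥ (w (t - i) - w (t - i + 1)) :=
        sum_comm' (by intros; simp only [mem_Icc]; omega)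
    _ = ∑ j ∈ Icc 1 q, Φ j *ᵥ (w (t - j) - w t) := by
        simp only [← mulVec_sum, sum_Icc_sub_lag_telescope]
    _ = _ := by simp only [mulVec_sub, sum_sub_distrib, sum_mulVec]

variable [DecidableEq m]

theorem mulVec_eq_add_varTail_sub {q : ℕ} {Φ : ℕ → Matrix m m R} {w e : ℤ → m → R} {t : ℤ}
    (hrec : w t = ∑ j ∈ Icc 1 q, Φ j *ᵥ w (t - j) + e t) :
    (1 - ∑ j ∈ Icc 1 q, Φ j) *ᵥ w t = e t + (varTail q Φ w (t - 1) - varTail q Φ w t) := by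
  rw [varTail_sub_varTail, sub_mulVec, one_mulVec]
  nth_rw 1 [hrec]
  abel

theorem mulVec_sum_Icc_eq_add_varTail_sub {q n : ℕ} {Φ : ℕ → Matrix m m R} {w e : ℤ → m → R}
    (hrec : ∀ t : ℤ, 1 ≤ t → t ≤ n → w t = ∑ j ∈ Icc 1 q, Φ j *ᵥ w (t - j) + e t) :
    (1 - ∑ j ∈ Icc 1 q, Φ j) *ᵥ ∑ t ∈ Icc (1 : ℤ) n, w t
      = ∑ t ∈ Icc (1 : ℤ) n, e t + (varTail q Φ w 0 - varTail q Φ w n) := by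
  rw [mulVec_sum, ← sum_Icc_int_sub_telescope, ← sum_add_distrib]
  refine sum_congr rfl fun t ht ↦ mulVec_eq_add_varTail_sub ?_
  obtain ⟨h1, hn⟩ := mem_Icc.mp ht
  exact hrec t h1 hn

end VarTail

theorem var_beveridge_nelson_partial_sum_general (d q n : ℕ)
    (Φ : ℕ → Matrix (Fin d) (Fin d) ℝ) (w e : ℤ → Fin d → ℝ)
    (hA : IsUnit ((1 : Matrix (Fin d) (Fin d) ℝ) - ∑ j ∈ Finset.Icc 1 q, Φ j).det)
    (hrec : ∀ t : ℤ, 1 ≤ t → t ≤ (n : ℤ) →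
      w t = (∑ j ∈ Finset.Icc 1 q, Φ j *ᵥ w (t - (j : ℤ))) + e t) :
    ∑ t ∈ Finset.Icc (1 : ℤ) (n : ℤ), w t
      = ((1 : Matrix (Fin d) (Fin d) ℝ) - ∑ j ∈ Finset.Icc 1 q, Φ j)⁻¹ *ᵥ
          (∑ t ∈ Finset.Icc (1 : ℤ) (n : ℤ), e t)
        + bnBar d q Φ w 0 - bnBar d q Φ w (n : ℤ) := by
  have := invertibleOfIsUnitDet _ hA
  change _ = _ + (_ *ᵥ varTail q Φ w 0) - _ *ᵥ varTail q Φ w n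
  rw [add_sub_assoc, ← mulVec_sub, ← mulVec_add]
  exact (inv_mulVec_eq_vec (mulVec_sum_Icc_eq_add_varTail_sub hrec).symm).symm

/-- **Beveridge–Nelson-type partial-sum identity for a finite-order VAR.** Let
`q, n, d ≥ 1`, let `Φ_1, …, Φ_q` be real `d×d` matrices with `A = I − ∑_{j=1}^q Φ_j`
invertible, and let `(w_t)_{t=1−q}^n`, `(ε_t)_{t=1}^n` satisfy
`w_t = ∑_{j=1}^q Φ_j w_{t−j} + ε_t` for `t = 1, …, n`.  With
`w̄_t = A⁻¹ ∑_{i=1}^q (∑_{j=i}^q Φ_j) w_{t+1−i}`, one has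
`∑_{t=1}^n w_t = A⁻¹ ∑_{t=1}^n ε_t + w̄_0 − w̄_n`. -/
theorem var_beveridge_nelson_partial_sum (d q n : ℕ) (hd : 1 ≤ d) (hq : 1 ≤ q)
    (hn : 1 ≤ n) (Φ : ℕ → Matrix (Fin d) (Fin d) ℝ) (w e : ℤ → Fin d → ℝ)
    (hA : IsUnit ((1 : Matrix (Fin d) (Fin d) ℝ) - ∑ j ∈ Finset.Icc 1 q, Φ j).det)
    (hrec : ∀ t : ℤ, 1 ≤ t → t ≤ (n : ℤ) →
      w t = (∑ j ∈ Finset.Icc 1 q, Φ j *ᵥ w (t - (j : ℤ))) + e t) :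
    ∑ t ∈ Finset.Icc (1 : ℤ) (n : ℤ), w t
      = ((1 : Matrix (Fin d) (Fin d) ℝ) - ∑ j ∈ Finset.Icc 1 q, Φ j)⁻¹ *ᵥ
          (∑ t ∈ Finset.Icc (1 : ℤ) (n : ℤ), e t)
        + bnBar d q Φ w 0 - bnBar d q Φ w (n : ℤ) :=
  var_beveridge_nelson_partial_sum_general d q n Φ w e hA hrec
end
end
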